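/- arXiv:2107.03745 — 2 statements merged into one kernel-verified Lean document; each statement's English description precedes it below -/
import Mathlib

section
/- In the torus J = C³/Λ, the fixed locus of the reflection r₂ : (z₁,z₂,z₃) ↦ (z₁,z₂,−z₃) is exactly the image of the plane V₁ = {z₃ = 0}; that is, r₂(z) − z ∈ Λ if and only if z is congruent modulo Λ to a point of V₁. -/
/-!
The coordinate functional of `Ke2` with respect to the `ℂ`-basis `Ke1, Ke2, Ke3` of `ℂ³` and the
third coordinate both map `Λ` into `ℤ[α] = ℤ + ℤα`, and conversely `ℤ[α] • Ke2 ⊆ Λ` and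
`ℤ[α] • (Ke1 + Ke3) ⊆ Λ`, where `Ke1 + Ke3` has third coordinate `α + ᾱ = 1`. Since
`r₂ z - z = -z₂ • Ke2`, both sides of the equivalence say that `z₂ ∈ ℤ[α]`.
-/

noncomputable section

def Kalpha : ℂ := (1 + Complex.I * Real.sqrt 7) / 2
def Kalphabar : ℂ := (1 - Complex.I * Real.sqrt 7) / 2

def Ke1 : Fin 3 → ℂ := ![0, Kalpha, Kalpha]
def Ke2 : Fin 3 → ℂ := ![0, 0, 2]
def Ke3 : Fin 3 → ℂ := ![1, 1, Kalphabar]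

def LambdaZ : Submodule ℤ (Fin 3 → ℂ) :=
  Submodule.span ℤ {Ke1, Ke2, Ke3, Kalpha • Ke1, Kalpha • Ke2, Kalpha • Ke3}

open Submodule

lemma Kalpha_add_Kalphabar : Kalpha + Kalphabar = 1 := by
  unfold Kalpha Kalphabar; ring

lemma Kalpha_mul_Kalpha : Kalpha * Kalpha = Kalpha - 2 := by
  have h7 : (Real.sqrt 7 : ℂ) ^ 2 = 7 := by
    rw [← Complex.ofReal_pow, Real.sq_sqrt (by norm_num)]; norm_num
  unfold Kalpha
  linear_combination (Complex.I ^ 2 / 4) * h7 + (7 / 4 : ℂ) * Complex.I_sq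

def intAlpha : Submodule ℤ ℂ := span ℤ {1, Kalpha}

lemma mem_intAlpha_iff {x : ℂ} : x ∈ intAlpha ↔ ∃ a b : ℤ, (a : ℂ) + b * Kalpha = x := by
  simp [intAlpha, mem_span_pair, zsmul_eq_mul]

lemma Kalpha_mul_mem_intAlpha {x : ℂ} (hx : x ∈ intAlpha) : Kalpha * x ∈ intAlpha := by
  obtain ⟨a, b, rfl⟩ := mem_intAlpha_iff.1 hx
  refine mem_intAlpha_iff.2 ⟨-2 * b, a + b, ?_⟩
  push_cast
  linear_combination (-(b : ℂ)) * Kalpha_mul_Kalpha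

lemma Kalpha_smul_mem_LambdaZ {w : Fin 3 → ℂ} (hw : w ∈ LambdaZ) : Kalpha • w ∈ LambdaZ := by
  induction hw using span_induction with
  | mem x hx =>
    simp only [Set.mem_insert_iff, Set.mem_singleton_iff] at hx
    rcases hx with rfl | rfl | rfl | rfl | rfl | rfl
    · exact subset_span (by simp)
    · exact subset_span (by simp)
    · exact subset_span (by simp)
    all_goals
      rw [smul_smul, Kalpha_mul_Kalpha, sub_smul, two_smul]
      exact sub_mem (subset_span (by simp)) (add_mem (subset_span (by simp)) (subset_span (by simp)))
  | zero => simp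
  | add x y _ _ hx hy => rw [smul_add]; exact add_mem hx hy
  | smul n x _ hx => rw [smul_comm]; exact LambdaZ.smul_mem n hx

lemma smul_mem_LambdaZ {t : ℂ} (ht : t ∈ intAlpha) {w : Fin 3 → ℂ} (hw : w ∈ LambdaZ) :
    t • w ∈ LambdaZ := by
  have : intAlpha ≤ LambdaZ.comap ((LinearMap.toSpanSingleton ℂ _ w).restrictScalars ℤ) := by
    rw [intAlpha, span_le, Set.pair_subset_iff]
    exact ⟨by simpa using hw, by simpa using Kalpha_smul_mem_LambdaZ hw⟩
  simpa using this ht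

lemma map_mem_intAlpha_of_mem_LambdaZ (f : (Fin 3 → ℂ) →ₗ[ℂ] ℂ) (h1 : f Ke1 ∈ intAlpha)
    (h2 : f Ke2 ∈ intAlpha) (h3 : f Ke3 ∈ intAlpha) {w : Fin 3 → ℂ} (hw : w ∈ LambdaZ) :
    f w ∈ intAlpha := by
  have : LambdaZ ≤ intAlpha.comap (f.restrictScalars ℤ) := by
    rw [LambdaZ, span_le]
    intro x hx
    simp only [Set.mem_insert_iff, Set.mem_singleton_iff] at hx
    rcases hx with rfl | rfl | rfl | rfl | rfl | rfl <;>
      simp only [SetLike.mem_coe, mem_comap, LinearMap.restrictScalars_apply, map_smul,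
        smul_eq_mul] <;>
      first | assumption | exact Kalpha_mul_mem_intAlpha ‹_›
  exact this hw

lemma apply_two_mem_intAlpha {w : Fin 3 → ℂ} (hw : w ∈ LambdaZ) : w 2 ∈ intAlpha := by
  refine map_mem_intAlpha_of_mem_LambdaZ (LinearMap.proj 2) ?_ ?_ ?_ hw <;>
    simp only [LinearMap.coe_proj, Function.eval, Ke1, Ke2, Ke3, Matrix.cons_val_two,
      Matrix.tail_cons, Matrix.head_cons] <;>
    refine mem_intAlpha_iff.2 ?_
  exacts [⟨0, 1, by simp⟩, ⟨2, 0, by simp⟩, ⟨1, -1, by linear_combination -Kalpha_add_Kalphabar⟩]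

/-- The coordinate of `Ke2` in the basis `Ke1, Ke2, Ke3` of `ℂ³`. -/
def coordKe2 : (Fin 3 → ℂ) →ₗ[ℂ] ℂ :=
  let x (i : Fin 3) : (Fin 3 → ℂ) →ₗ[ℂ] ℂ := LinearMap.proj i
  (1 / 2 : ℂ) • (x 2 - x 1 + Kalpha • x 0)

lemma coordKe2_apply (u : Fin 3 → ℂ) : coordKe2 u = (u 2 - u 1 + Kalpha * u 0) / 2 := by
  simp only [coordKe2, LinearMap.smul_apply, LinearMap.add_apply, LinearMap.sub_apply,
    LinearMap.coe_proj, Function.eval, smul_eq_mul]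
  ring

lemma smul_Ke2_mem_LambdaZ_iff {t : ℂ} : t • Ke2 ∈ LambdaZ ↔ t ∈ intAlpha := by
  refine ⟨fun h => ?_, fun ht => smul_mem_LambdaZ ht (subset_span (by simp))⟩
  have hcoord : coordKe2 (t • Ke2) = t := by
    simp [coordKe2_apply, Ke2]
  rw [← hcoord]
  refine map_mem_intAlpha_of_mem_LambdaZ coordKe2 ?_ ?_ ?_ h <;>
    refine mem_intAlpha_iff.2 ?_ <;>
    simp only [coordKe2_apply, Ke1, Ke2, Ke3, Matrix.cons_val_zero, Matrix.cons_val_one,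
      Matrix.cons_val_two, Matrix.tail_cons, Matrix.head_cons]
  exacts [⟨0, 0, by ring⟩, ⟨1, 0, by simp⟩, ⟨0, 0, by linear_combination -Kalpha_add_Kalphabar / 2⟩]

lemma Ke1_add_Ke3_apply_two : (Ke1 + Ke3) 2 = 1 := by
  simp only [Ke1, Ke3, Fin.isValue, Pi.add_apply, Matrix.cons_val]
  linear_combination Kalpha_add_Kalphabar

lemma reflect_sub_self (z : Fin 3 → ℂ) : ![z 0, z 1, -z 2] - z = (-z 2) • Ke2 := by
  ext i
  fin_cases i <;>
    simp only [Ke2, Fin.isValue, Fin.zero_eta, Fin.mk_one, Fin.reduceFinMk, Pi.sub_apply,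
      Pi.smul_apply, Matrix.cons_val, Matrix.cons_val_zero, Matrix.cons_val_one, smul_eq_mul] <;>
    ring

/-- The fixed locus in `J = ℂ³/Λ` of the reflection
`r₂ : (z₁,z₂,z₃) ↦ (z₁,z₂,-z₃)` is exactly the image of the mirror
`V₁ = {z₃ = 0}`: `r₂z - z ∈ Λ` iff `z` is congruent mod `Λ` to a point of `V₁`. -/
theorem fixed_locus_of_reflection_r2 :
    ∀ z : Fin 3 → ℂ,
      (![z 0, z 1, -z 2] - z ∈ LambdaZ) ↔
      (∃ v : Fin 3 → ℂ, v 2 = 0 ∧ z - v ∈ LambdaZ) := by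
  intro z
  rw [reflect_sub_self, smul_Ke2_mem_LambdaZ_iff, neg_mem_iff]
  constructor
  · intro hz
    refine ⟨z - z 2 • (Ke1 + Ke3), ?_, ?_⟩
    · rw [Pi.sub_apply, Pi.smul_apply, Ke1_add_Ke3_apply_two, smul_eq_mul, mul_one, sub_self]
    · rw [sub_sub_cancel]
      exact smul_mem_LambdaZ hz (add_mem (subset_span (by simp)) (subset_span (by simp)))
  · rintro ⟨v, hv, hzv⟩
    simpa [hv] using apply_two_mem_intAlpha hzv

end
end

section
/- In the torus J = C³/Λ, the fixed locus of the order-3 element −c : (z₁,z₂,z₃) ↦ (z₃,z₁,z₂) is connected: it equals the image of the diagonal line V₁ = {(x,x,x) : x ∈ C}; equivalently, every z ∈ C³ with (z₃−z₁, z₁−z₂, z₂−z₃) ∈ Λ lies in V₁ + Λ. -/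
/-!
The map `σ z = (z₃ - z₁, z₁ - z₂, z₂ - z₃)` (`cycleSub`) is `ℂ`-linear with kernel the diagonal
`V₁`, its values have coordinate sum `0`, and it maps `Λ` into itself. The point is that `σ(Λ)` is
all of `Λ ∩ {w₁ + w₂ + w₃ = 0}`: the coordinate sum of
`a e₁ + b e₂ + c e₃ + α (d e₁ + f e₂ + g e₃)` is `p + q α` with `p, q ∈ ℤ`, and since `1, α` are
independent over `ℝ` its vanishing pins the integers down to a rank-four family, each member of
which is `σ` of an explicit lattice vector. Hence if `σ z ∈ Λ` then `σ z = σ u` with `u ∈ Λ`, and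
`z - u ∈ V₁`.
-/

noncomputable section

lemma Kalpha_sq : Kalpha ^ 2 = Kalpha - 2 := by
  have h7 : ((Real.sqrt 7 : ℝ) : ℂ) ^ 2 = 7 := by
    rw [← Complex.ofReal_pow, Real.sq_sqrt (by norm_num)]
    norm_num
  unfold Kalpha
  linear_combination (Complex.I ^ 2 / 4) * h7 + (7 / 4) * Complex.I_sq

lemma Kalphabar_eq_one_sub : Kalphabar = 1 - Kalpha := by
  unfold Kalpha Kalphabar
  ring

lemma Kalpha_im_ne_zero : Kalpha.im ≠ 0 := by
  simp [Kalpha]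

lemma Complex.eq_zero_of_intCast_add_intCast_mul_eq_zero {α : ℂ} (hα : α.im ≠ 0) {m n : ℤ}
    (h : (m : ℂ) + n * α = 0) : m = 0 ∧ n = 0 := by
  have hn : n = 0 := by
    simpa [hα] using congrArg Complex.im h
  subst hn
  simpa using h

lemma mem_LambdaZ_iff {w : Fin 3 → ℂ} : w ∈ LambdaZ ↔ ∃ a b c d f g : ℤ,
    a • Ke1 + b • Ke2 + c • Ke3 + d • (Kalpha • Ke1) + f • (Kalpha • Ke2)
      + g • (Kalpha • Ke3) = w := by
  simp only [LambdaZ, Submodule.mem_span_insert, Submodule.mem_span_singleton]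
  constructor
  · rintro ⟨a, _, ⟨b, _, ⟨c, _, ⟨d, _, ⟨f, _, ⟨g, rfl⟩, rfl⟩, rfl⟩, rfl⟩, rfl⟩, rfl⟩
    exact ⟨a, b, c, d, f, g, by abel⟩
  · rintro ⟨a, b, c, d, f, g, rfl⟩
    exact ⟨a, _, ⟨b, _, ⟨c, _, ⟨d, _, ⟨f, _, ⟨g, rfl⟩, rfl⟩, rfl⟩, rfl⟩, rfl⟩, by abel⟩

def cycleSub : (Fin 3 → ℂ) →ₗ[ℂ] (Fin 3 → ℂ) where
  toFun z := ![z 2 - z 0, z 0 - z 1, z 1 - z 2]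
  map_add' z w := by ext i; fin_cases i <;> simp <;> ring
  map_smul' a z := by ext i; fin_cases i <;> simp <;> ring

lemma sum_cycleSub (z : Fin 3 → ℂ) : ∑ i, cycleSub z i = 0 := by
  simp [cycleSub, Fin.sum_univ_three]

lemma ker_cycleSub : LinearMap.ker cycleSub = ℂ ∙ ![1, 1, 1] := by
  ext v
  rw [LinearMap.mem_ker, Submodule.mem_span_singleton]
  constructor
  · intro hv
    have h1 : v 1 = v 0 := (sub_eq_zero.mp (congrFun hv 1)).symm
    have h2 : v 2 = v 0 := sub_eq_zero.mp (congrFun hv 0)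
    refine ⟨v 0, ?_⟩
    ext i; fin_cases i <;> simp [h1, h2]
  · rintro ⟨x, rfl⟩
    ext i; fin_cases i <;> simp [cycleSub]

lemma cycleSub_mem_LambdaZ {u : Fin 3 → ℂ} (hu : u ∈ LambdaZ) : cycleSub u ∈ LambdaZ := by
  suffices LambdaZ ≤ LambdaZ.comap (cycleSub.restrictScalars ℤ) from this hu
  refine Submodule.span_le.mpr ?_
  simp only [Set.insert_subset_iff, Set.singleton_subset_iff, SetLike.mem_coe,
    Submodule.mem_comap, LinearMap.coe_restrictScalars]
  refine ⟨mem_LambdaZ_iff.mpr ⟨-2, -1, 0, 0, 1, 1, ?_⟩, mem_LambdaZ_iff.mpr ⟨-1, -1, 2, 1, 1, 0, ?_⟩,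
    mem_LambdaZ_iff.mpr ⟨1, 1, 0, 0, 0, -1, ?_⟩, mem_LambdaZ_iff.mpr ⟨0, -2, -2, -2, 0, 1, ?_⟩,
    mem_LambdaZ_iff.mpr ⟨-2, -2, 0, 0, 0, 2, ?_⟩, mem_LambdaZ_iff.mpr ⟨0, 0, 2, 1, 1, -1, ?_⟩⟩ <;>
  ext i <;> fin_cases i <;> simp [cycleSub, Ke1, Ke2, Ke3, Kalphabar_eq_one_sub] <;> grind [Kalpha_sq]

lemma exists_mem_LambdaZ_cycleSub_eq {w : Fin 3 → ℂ} (hw : w ∈ LambdaZ) (hsum : ∑ i, w i = 0) :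
    ∃ u ∈ LambdaZ, cycleSub u = w := by
  obtain ⟨a, b, c, d, f, g, rfl⟩ := mem_LambdaZ_iff.mp hw
  have hsum' : ((2 * b + 3 * c - 4 * d + 2 * g : ℤ) : ℂ)
      + ((2 * a - c + 2 * d + 2 * f + 2 * g : ℤ) : ℂ) * Kalpha = 0 := by
    rw [← hsum]
    simp [Fin.sum_univ_three, Ke1, Ke2, Ke3, Kalphabar_eq_one_sub]
    grind [Kalpha_sq]
  obtain ⟨hre, him⟩ := Complex.eq_zero_of_intCast_add_intCast_mul_eq_zero Kalpha_im_ne_zero hsum'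
  obtain ⟨c, rfl⟩ : 2 ∣ c := by omega
  obtain rfl : a = c - d - f - g := by omega
  obtain rfl : b = 2 * d - 3 * c - g := by omega
  refine ⟨_, mem_LambdaZ_iff.mpr ⟨d + f - 2 * c, 2 * c - d, f - g - c, c - d, 0, 0, rfl⟩, ?_⟩
  ext i; fin_cases i <;> simp [cycleSub, Ke1, Ke2, Ke3, Kalphabar_eq_one_sub] <;> grind [Kalpha_sq]

/-- The fixed locus in `J = ℂ³/Λ` of the order-3 element
`-c : (z₁,z₂,z₃) ↦ (z₃,z₁,z₂)` is connected: it is the image of the diagonal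
`V₁ = {(x,x,x)}`; i.e. `(z₃-z₁, z₁-z₂, z₂-z₃) ∈ Λ` iff `z ∈ V₁ + Λ`. -/
theorem fixed_locus_of_order_three :
    ∀ z : Fin 3 → ℂ,
      (![z 2 - z 0, z 0 - z 1, z 1 - z 2] ∈ LambdaZ) ↔
      (∃ x : ℂ, z - x • ![1,1,1] ∈ LambdaZ) := by
  intro z
  change cycleSub z ∈ LambdaZ ↔ _
  constructor
  · intro hz
    obtain ⟨u, hu, hzu⟩ := exists_mem_LambdaZ_cycleSub_eq hz (sum_cycleSub z)
    obtain ⟨x, hx⟩ : ∃ x : ℂ, x • ![1, 1, 1] = z - u := by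
      rw [← Submodule.mem_span_singleton, ← ker_cycleSub, LinearMap.mem_ker, map_sub, hzu,
        sub_self]
    exact ⟨x, by rwa [hx, sub_sub_cancel]⟩
  · rintro ⟨x, hx⟩
    have hdiag : cycleSub (x • ![1, 1, 1]) = 0 := by
      rw [← LinearMap.mem_ker, ker_cycleSub]
      exact Submodule.smul_mem _ x (Submodule.mem_span_singleton_self _)
    simpa only [map_sub, hdiag, sub_zero] using cycleSub_mem_LambdaZ hx

end
end
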